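/- arXiv:math/0607018 — 2 statements merged into one kernel-verified Lean document; each statement's English description precedes it below -/
import Mathlib

section
/- Let ξ and η be even, unimodal probability density functions on ℝ, let n > 0, ν > 0, and define I_i(d) = ∫ x^i √n η(√n(x−d)) ν ξ(νx) dx for i = 0, 1. If I_1(d) is finite, then |I_1(d)/I_0(d)| ≤ |d|. -/
/-!
Write `I₀ = ∫ p (x - d) q x` and `I₁ = ∫ x p (x - d) q x`, where `p y = √n η (√n y)`
and `q x = ν ξ (ν x)` are again even and unimodal. Substituting `x = d - z` gives
`d I₀ - I₁ = ∫ z p z q (d - z)`, and by evenness of `p`, `I₁ = ∫ x q x p (d - x)`.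
Both are integrals of the shape `∫ z f z g (d - z)` with `f ≥ 0` even and `g` even unimodal;
folding such an integral onto `z > 0` leaves `z f z (g (d - z) - g (d + z))`, which has the
sign of `d` because `|d - z| ≤ |d + z|` exactly when `d z ≥ 0`. Hence `I₁` lies between
`0` and `d I₀`.
-/

open MeasureTheory Set

def SymmetricUnimodal (g : ℝ → ℝ) : Prop :=
  Function.Even g ∧ AntitoneOn g (Ici 0)

namespace SymmetricUnimodal

variable {g : ℝ → ℝ}

theorem apply_abs (hg : SymmetricUnimodal g) (x : ℝ) : g |x| = g x := by
  rcases abs_choice x with h | h <;> rw [h]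
  exact hg.1 x

theorem apply_le_of_abs_le (hg : SymmetricUnimodal g) {a b : ℝ} (h : |a| ≤ |b|) :
    g b ≤ g a := by
  rw [← hg.apply_abs a, ← hg.apply_abs b]
  exact hg.2 (abs_nonneg a) ((abs_nonneg a).trans h) h

theorem const_mul_comp_mul (hg : SymmetricUnimodal g) {c : ℝ} (hc : 0 ≤ c) :
    SymmetricUnimodal fun x => c * g (c * x) := by
  refine ⟨fun x => by simp only [mul_neg, hg.1 (c * x)], fun x hx y hy hxy => ?_⟩
  have hcx : c * x ∈ Ici 0 := mul_nonneg hc hx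
  have hcy : c * y ∈ Ici 0 := mul_nonneg hc hy
  exact mul_le_mul_of_nonneg_left (hg.2 hcx hcy (mul_le_mul_of_nonneg_left hxy hc)) hc

end SymmetricUnimodal

theorem integral_eq_integral_Ioi_add_comp_neg {φ : ℝ → ℝ} (hφ : Integrable φ) :
    ∫ x, φ x = ∫ x in Ioi 0, (φ x + φ (-x)) := by
  rw [integral_add hφ.integrableOn hφ.comp_neg.integrableOn, integral_comp_neg_Ioi, neg_zero,
    add_comm, ← setIntegral_union (Iic_disjoint_Ioi le_rfl) measurableSet_Ioi
      hφ.integrableOn hφ.integrableOn, Iic_union_Ioi, setIntegral_univ]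

section FoldedIntegral

variable {f g : ℝ → ℝ} {d : ℝ}

theorem integral_mul_mul_comp_sub_eq (hf : Function.Even f)
    (hint : Integrable fun z => z * f z * g (d - z)) :
    ∫ z, z * f z * g (d - z) = ∫ z in Ioi 0, z * f z * (g (d - z) - g (d + z)) := by
  rw [integral_eq_integral_Ioi_add_comp_neg hint]
  refine setIntegral_congr_fun measurableSet_Ioi fun z _ => ?_
  simp only [hf z, sub_neg_eq_add]
  ring

variable (hf0 : ∀ x, 0 ≤ f x) (hf : Function.Even f) (hg : SymmetricUnimodal g)
  (hint : Integrable fun z => z * f z * g (d - z))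
include hf0 hf hg hint

theorem integral_mul_mul_comp_sub_nonneg (hd : 0 ≤ d) : 0 ≤ ∫ z, z * f z * g (d - z) := by
  rw [integral_mul_mul_comp_sub_eq hf hint]
  refine setIntegral_nonneg measurableSet_Ioi fun z (hz : 0 < z) => ?_
  have hdz : |d - z| ≤ |d + z| := by
    rw [abs_of_nonneg (by linarith : 0 ≤ d + z)]
    exact abs_le.2 ⟨by linarith, by linarith⟩
  exact mul_nonneg (mul_nonneg hz.le (hf0 z)) (sub_nonneg.2 (hg.apply_le_of_abs_le hdz))

theorem integral_mul_mul_comp_sub_nonpos (hd : d ≤ 0) : ∫ z, z * f z * g (d - z) ≤ 0 := by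
  rw [integral_mul_mul_comp_sub_eq hf hint]
  refine setIntegral_nonpos measurableSet_Ioi fun z (hz : 0 < z) => ?_
  have hdz : |d + z| ≤ |d - z| := by
    rw [abs_of_nonpos (by linarith : d - z ≤ 0)]
    exact abs_le.2 ⟨by linarith, by linarith⟩
  exact mul_nonpos_of_nonneg_of_nonpos (mul_nonneg hz.le (hf0 z))
    (sub_nonpos.2 (hg.apply_le_of_abs_le hdz))

end FoldedIntegral

section ShiftedProduct

variable {p q : ℝ → ℝ} {d : ℝ}

theorem mul_comp_sub_mul_eq (hp : Function.Even p) (x : ℝ) :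
    x * (p (x - d) * q x) = x * q x * p (d - x) := by
  rw [← hp, neg_sub]
  ring

theorem mul_sub_mul_comp_sub_mul_eq (hp : Function.Even p) (z : ℝ) :
    d * (p (d - z - d) * q (d - z)) - (d - z) * (p (d - z - d) * q (d - z)) =
      z * p z * q (d - z) := by
  rw [sub_sub_cancel_left, hp]
  ring

variable (hp : Function.Even p) (hI₀ : Integrable fun x => p (x - d) * q x)
  (hI₁ : Integrable fun x => x * (p (x - d) * q x))
include hp hI₀ hI₁

theorem integrable_mul_mul_comp_sub : Integrable fun z => z * p z * q (d - z) :=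
  (((hI₀.const_mul d).sub hI₁).comp_sub_left d).congr
    (Filter.Eventually.of_forall (mul_sub_mul_comp_sub_mul_eq hp))

theorem mul_integral_sub_integral_mul_eq :
    d * (∫ x, p (x - d) * q x) - ∫ x, x * (p (x - d) * q x) = ∫ z, z * p z * q (d - z) := by
  rw [← integral_const_mul, ← integral_sub (hI₀.const_mul d) hI₁,
    ← integral_sub_left_eq_self _ volume d]
  exact integral_congr_ae (Filter.Eventually.of_forall (mul_sub_mul_comp_sub_mul_eq hp))

end ShiftedProduct

theorem abs_integral_mul_comp_sub_mul_le {p q : ℝ → ℝ} {d : ℝ} (hp0 : ∀ x, 0 ≤ p x)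
    (hq0 : ∀ x, 0 ≤ q x) (hp : SymmetricUnimodal p) (hq : SymmetricUnimodal q)
    (hI₀ : Integrable fun x => p (x - d) * q x)
    (hI₁ : Integrable fun x => x * (p (x - d) * q x)) :
    |∫ x, x * (p (x - d) * q x)| ≤ |d| * ∫ x, p (x - d) * q x := by
  have hsub := mul_integral_sub_integral_mul_eq hp.1 hI₀ hI₁
  have hJ := integrable_mul_mul_comp_sub hp.1 hI₀ hI₁
  have hswap : ∀ᵐ x, x * (p (x - d) * q x) = x * q x * p (d - x) :=
    .of_forall (mul_comp_sub_mul_eq hp.1)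
  have hI₁' := hI₁.congr hswap
  rw [integral_congr_ae hswap] at hsub ⊢
  rcases le_total 0 d with hd | hd
  · have := integral_mul_mul_comp_sub_nonneg hq0 hq.1 hp hI₁' hd
    have := integral_mul_mul_comp_sub_nonneg hp0 hp.1 hq hJ hd
    rw [abs_of_nonneg hd, abs_le]
    constructor <;> linarith
  · have := integral_mul_mul_comp_sub_nonpos hq0 hq.1 hp hI₁' hd
    have := integral_mul_mul_comp_sub_nonpos hp0 hp.1 hq hJ hd
    rw [abs_of_nonpos hd, abs_le]
    constructor <;> linarith

theorem stmt_0_general (ξ η : ℝ → ℝ)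
    (hξ0 : ∀ x, 0 ≤ ξ x) (hη0 : ∀ x, 0 ≤ η x)
    (hξe : ∀ x, ξ (-x) = ξ x) (hηe : ∀ x, η (-x) = η x)
    (hξm : AntitoneOn ξ (Set.Ici 0)) (hηm : AntitoneOn η (Set.Ici 0))
    (n ν : ℝ) (hν : 0 < ν) (d : ℝ)
    (hI1 : Integrable (fun x =>
      x * (Real.sqrt n * η (Real.sqrt n * (x - d)) * (ν * ξ (ν * x))))) :
    |(∫ x, x * (Real.sqrt n * η (Real.sqrt n * (x - d)) * (ν * ξ (ν * x)))) /
      (∫ x, Real.sqrt n * η (Real.sqrt n * (x - d)) * (ν * ξ (ν * x)))| ≤ |d| := by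
  set p : ℝ → ℝ := fun y => Real.sqrt n * η (Real.sqrt n * y)
  set q : ℝ → ℝ := fun x => ν * ξ (ν * x)
  have hp0 (y : ℝ) : 0 ≤ p y := mul_nonneg (Real.sqrt_nonneg n) (hη0 _)
  have hq0 (x : ℝ) : 0 ≤ q x := mul_nonneg hν.le (hξ0 _)
  have hI₀nonneg : 0 ≤ ∫ x, p (x - d) * q x :=
    integral_nonneg fun x => mul_nonneg (hp0 _) (hq0 _)
  rw [abs_div, abs_of_nonneg hI₀nonneg]
  -- a non-integrable `I₀` makes the quotient `I₁ / 0 = 0`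
  by_cases hI₀ : Integrable fun x => p (x - d) * q x
  · have hp : SymmetricUnimodal p := .const_mul_comp_mul ⟨hηe, hηm⟩ (Real.sqrt_nonneg n)
    have hq : SymmetricUnimodal q := .const_mul_comp_mul ⟨hξe, hξm⟩ hν.le
    exact div_le_of_le_mul₀ hI₀nonneg (abs_nonneg d)
      (abs_integral_mul_comp_sub_mul_le hp0 hq0 hp hq hI₀ hI1)
  · rw [integral_undef hI₀, div_zero]
    exact abs_nonneg d

/-- Lemma 1 of the paper: if ξ and η are even unimodal probability densities and
`I₁(d)` is finite, then `|I₁(d)/I₀(d)| ≤ |d|`. -/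
theorem stmt_0 (ξ η : ℝ → ℝ)
    (hξ0 : ∀ x, 0 ≤ ξ x) (hη0 : ∀ x, 0 ≤ η x)
    (hξ1 : ∫ x, ξ x = 1) (hη1 : ∫ x, η x = 1)
    (hξe : ∀ x, ξ (-x) = ξ x) (hηe : ∀ x, η (-x) = η x)
    (hξm : AntitoneOn ξ (Set.Ici 0)) (hηm : AntitoneOn η (Set.Ici 0))
    (n ν : ℝ) (hn : 0 < n) (hν : 0 < ν) (d : ℝ)
    (hI1 : Integrable (fun x =>
      x * (Real.sqrt n * η (Real.sqrt n * (x - d)) * (ν * ξ (ν * x))))) :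
    |(∫ x, x * (Real.sqrt n * η (Real.sqrt n * (x - d)) * (ν * ξ (ν * x)))) /
      (∫ x, Real.sqrt n * η (Real.sqrt n * (x - d)) * (ν * ξ (ν * x)))| ≤ |d| :=
  stmt_0_general ξ η hξ0 hη0 hξe hηe hξm hηm n ν hν d hI1
end

section
/- Suppose θ satisfies Σ_{k=0}^{2^j−1} |θ_{jk}|^p ≤ A 2^{−jp(r+1/2−1/p)} for all j, with 1 ≤ p < 2 and r > 1/p. Then for any b > 0, Σ_j Σ_k θ_{jk}² 1{√n |θ_{jk}| ≤ (ln n)^b} ≤ C n^{−2r/(2r+1)} (ln n)^{4br/(2r+1)}. -/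
/-!
Put `δ = (ln n)^b / √n`, so that the indicator is `1{|θ_{jk}| ≤ δ}`. At level `j` the thresholded
energy is at most `2^j δ²` (each term is at most `δ²`) and at most `δ^{2-p} Σ_k |θ_{jk}|^p ≤
A δ^{2-p} 2^{-ja}` with `a = p(r + 1/2 - 1/p) > 0`. Using the first bound below the dyadic level
`2^j ≈ δ^{-2/(2r+1)}` and the second above it, both pieces are of order `δ^{4r/(2r+1)}`, which is
`n^{-2r/(2r+1)} (ln n)^{4br/(2r+1)}`.
-/

open Real Finset

lemma sq_le_rpow_mul_abs_rpow {x δ p : ℝ} (hp : p ≤ 2) (hx : |x| ≤ δ) :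
    x ^ 2 ≤ δ ^ (2 - p) * |x| ^ p := by
  have hsplit : x ^ 2 = |x| ^ (2 - p) * |x| ^ p := by
    rw [← rpow_add' (abs_nonneg x) (by norm_num), sub_add_cancel, rpow_two, sq_abs]
  rw [hsplit]
  gcongr

section Thresholded

variable {ι : Type*} (s : Finset ι) (f : ι → ℝ) (δ : ℝ)

lemma sum_ite_abs_le_sq_le_card_mul_sq :
    ∑ k ∈ s, (if |f k| ≤ δ then f k ^ 2 else 0) ≤ #s * δ ^ 2 := by
  rw [← nsmul_eq_mul, ← sum_const]
  refine sum_le_sum fun k _ => ?_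
  split_ifs with h
  · rw [← sq_abs]
    exact pow_le_pow_left₀ (abs_nonneg _) h 2
  · positivity

lemma sum_ite_abs_le_sq_le_rpow_mul_sum {p : ℝ} (hp : p ≤ 2) (hδ : 0 ≤ δ) :
    ∑ k ∈ s, (if |f k| ≤ δ then f k ^ 2 else 0) ≤ δ ^ (2 - p) * ∑ k ∈ s, |f k| ^ p := by
  rw [mul_sum]
  refine sum_le_sum fun k _ => ?_
  split_ifs with h
  · exact sq_le_rpow_mul_abs_rpow hp h
  · positivity

end Thresholded

lemma exists_two_pow_mem_Icc {t : ℝ} (ht : 0 ≤ t) :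
    ∃ J : ℕ, (2 : ℝ) ^ J ∈ Set.Icc t (2 * t + 1) := by
  classical
  have hex : ∃ J : ℕ, t ≤ 2 ^ J := (pow_unbounded_of_one_lt t one_lt_two).imp fun _ => le_of_lt
  refine ⟨Nat.find hex, Nat.find_spec hex, ?_⟩
  rcases hJ : Nat.find hex with _ | k
  · norm_num
    linarith
  · have hk : (2 : ℝ) ^ k < t := not_le.mp (Nat.find_min hex (by omega))
    rw [pow_succ]
    linarith

lemma tsum_le_of_le_two_pow_of_le_geometric {g : ℕ → ℝ} {H D c : ℝ} (hg : ∀ j, 0 ≤ g j)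
    (hc0 : 0 ≤ c) (hc1 : c < 1) (hH : ∀ j, g j ≤ H * 2 ^ j) (hD : ∀ j, g j ≤ D * c ^ j)
    (J : ℕ) : ∑' j, g j ≤ H * (2 ^ J - 1) + D * c ^ J / (1 - c) := by
  have hgeom : Summable fun j => c ^ j := summable_geometric_of_lt_one hc0 hc1
  have hsum : Summable g := .of_nonneg_of_le hg hD (hgeom.mul_left D)
  have hhead : ∑ j ∈ range J, g j ≤ H * (2 ^ J - 1) := by
    calc ∑ j ∈ range J, g j ≤ ∑ j ∈ range J, H * 2 ^ j := sum_le_sum fun j _ => hH j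
      _ = H * (2 ^ J - 1) := by rw [← mul_sum, geom_sum_eq (by norm_num)]; norm_num
  have htail : ∑' j, g (j + J) ≤ D * c ^ J / (1 - c) := by
    calc ∑' j, g (j + J) ≤ ∑' j, D * c ^ J * c ^ j :=
          (hsum.comp_injective (add_left_injective J)).tsum_le_tsum
            (fun j => (hD _).trans_eq (by ring)) (hgeom.mul_left _)
      _ = D * c ^ J / (1 - c) := by
          rw [tsum_mul_left, tsum_geometric_of_lt_one hc0 hc1, div_eq_mul_inv]
  rw [← hsum.sum_add_tsum_nat_add J]
  exact add_le_add hhead htail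

lemma tsum_le_of_le_two_pow_of_le_two_pow_rpow_neg {g : ℕ → ℝ} {H D a t : ℝ}
    (hg : ∀ j, 0 ≤ g j) (ha : 0 < a) (hH0 : 0 ≤ H) (hD0 : 0 ≤ D) (ht : 0 < t)
    (hH : ∀ j, g j ≤ H * 2 ^ j) (hD : ∀ j, g j ≤ D * ((2 : ℝ) ^ j) ^ (-a)) :
    ∑' j, g j ≤ 2 * H * t + D * t ^ (-a) / (1 - 2 ^ (-a)) := by
  set c : ℝ := 2 ^ (-a)
  have hc0 : 0 ≤ c := by positivity
  have hc1 : c < 1 := rpow_lt_one_of_one_lt_of_neg one_lt_two (neg_neg_of_pos ha)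
  have hpow : ∀ j : ℕ, ((2 : ℝ) ^ j) ^ (-a) = c ^ j := fun j => by
    rw [← rpow_natCast_mul zero_le_two, mul_comm, rpow_mul_natCast zero_le_two]
  obtain ⟨J, htJ, hJt⟩ := exists_two_pow_mem_Icc ht.le
  have hcJ : c ^ J ≤ t ^ (-a) := hpow J ▸ rpow_le_rpow_of_nonpos ht htJ (by linarith)
  calc ∑' j, g j ≤ H * (2 ^ J - 1) + D * c ^ J / (1 - c) :=
        tsum_le_of_le_two_pow_of_le_geometric hg hc0 hc1 hH (fun j => hpow j ▸ hD j) J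
    _ ≤ H * (2 * t) + D * t ^ (-a) / (1 - c) := by
        gcongr
        linarith
    _ = 2 * H * t + D * t ^ (-a) / (1 - c) := by ring

theorem exists_tsum_sum_ite_abs_le_sq_le {p r A : ℝ} (hp1 : 1 ≤ p) (hp2 : p < 2)
    (hr : 1 / p < r) (hA : 0 < A) (θ : ℕ → ℕ → ℝ)
    (hθ : ∀ j : ℕ, ∑ k ∈ range (2 ^ j), |θ j k| ^ p ≤
      A * (2 : ℝ) ^ (-(j : ℝ) * p * (r + 1 / 2 - 1 / p))) :
    ∃ C : ℝ, 0 < C ∧ ∀ δ : ℝ, 0 < δ →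
      ∑' j, ∑ k ∈ range (2 ^ j), (if |θ j k| ≤ δ then θ j k ^ 2 else 0) ≤
        C * δ ^ (4 * r / (2 * r + 1)) := by
  set a := p * (r + 1 / 2 - 1 / p) with ha_def
  have hp0 : 0 < p := by linarith
  have hpr : 1 < p * r := by rwa [div_lt_iff₀ hp0, mul_comm] at hr
  have ha_eq : a = p * r + p / 2 - 1 := by rw [ha_def]; field_simp
  have ha : 0 < a := by linarith
  have hr0 : 0 < r := lt_trans (by positivity) hr
  have hc1 : (2 : ℝ) ^ (-a) < 1 := rpow_lt_one_of_one_lt_of_neg one_lt_two (neg_neg_of_pos ha)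
  refine ⟨2 + A / (1 - 2 ^ (-a)), by have := sub_pos.2 hc1; positivity, fun δ hδ => ?_⟩
  have hH : ∀ j, ∑ k ∈ range (2 ^ j), (if |θ j k| ≤ δ then θ j k ^ 2 else 0) ≤ δ ^ 2 * 2 ^ j :=
    fun j => by
      simpa [mul_comm] using sum_ite_abs_le_sq_le_card_mul_sq (range (2 ^ j)) (θ j) δ
  have hD : ∀ j, ∑ k ∈ range (2 ^ j), (if |θ j k| ≤ δ then θ j k ^ 2 else 0) ≤
      A * δ ^ (2 - p) * ((2 : ℝ) ^ j) ^ (-a) := fun j => by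
    have hexp : (2 : ℝ) ^ (-(j : ℝ) * p * (r + 1 / 2 - 1 / p)) = ((2 : ℝ) ^ j) ^ (-a) := by
      rw [← rpow_natCast_mul zero_le_two, ha_def]; ring_nf
    calc _ ≤ δ ^ (2 - p) * ∑ k ∈ range (2 ^ j), |θ j k| ^ p :=
          sum_ite_abs_le_sq_le_rpow_mul_sum _ _ _ hp2.le hδ.le
      _ ≤ δ ^ (2 - p) * (A * ((2 : ℝ) ^ j) ^ (-a)) := by rw [← hexp]; gcongr; exact hθ j
      _ = A * δ ^ (2 - p) * ((2 : ℝ) ^ j) ^ (-a) := by ring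
  refine (tsum_le_of_le_two_pow_of_le_two_pow_rpow_neg (t := δ ^ (-2 / (2 * r + 1)))
    (fun j => sum_nonneg fun k _ => by split_ifs <;> positivity) ha (by positivity)
    (by positivity) (by positivity) hH hD).trans_eq ?_
  have hhead : δ ^ 2 * δ ^ (-2 / (2 * r + 1)) = δ ^ (4 * r / (2 * r + 1)) := by
    rw [← rpow_natCast, ← rpow_add hδ]; congr 1; field_simp; ring
  have htail : δ ^ (2 - p) * (δ ^ (-2 / (2 * r + 1))) ^ (-a) = δ ^ (4 * r / (2 * r + 1)) := by
    rw [← rpow_mul hδ.le, ← rpow_add hδ, ha_eq]; congr 1; field_simp; ring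
  rw [mul_assoc 2, hhead, mul_assoc A, htail]
  ring

theorem stmt_17_general (p r A b : ℝ) (hp1 : 1 ≤ p) (hp2 : p < 2) (hr : 1 / p < r)
    (hA : 0 < A)
    (θ : ℕ → ℕ → ℝ)
    (hθ : ∀ j : ℕ, ∑ k ∈ Finset.range (2 ^ j), |θ j k| ^ p ≤
      A * (2 : ℝ) ^ (-(j : ℝ) * p * (r + 1 / 2 - 1 / p))) :
    ∃ C : ℝ, 0 < C ∧ ∀ n : ℕ, 2 ≤ n →
      ∑' j : ℕ, ∑ k ∈ Finset.range (2 ^ j),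
          (if Real.sqrt n * |θ j k| ≤ (Real.log n) ^ b then (θ j k) ^ 2 else 0)
        ≤ C * (n : ℝ) ^ (-(2 * r) / (2 * r + 1)) *
            (Real.log n) ^ (4 * b * r / (2 * r + 1)) := by
  obtain ⟨C, hC, hbound⟩ := exists_tsum_sum_ite_abs_le_sq_le hp1 hp2 hr hA θ hθ
  refine ⟨C, hC, fun n hn => ?_⟩
  have hn0 : (0 : ℝ) < n := by positivity
  have hlog : 0 < log n := log_pos (by exact_mod_cast hn)
  have hsqrt : 0 < √(n : ℝ) := sqrt_pos.2 hn0
  set δ := log n ^ b / √(n : ℝ)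
  have hcond : ∀ x : ℝ, √(n : ℝ) * |x| ≤ log n ^ b ↔ |x| ≤ δ := fun x => by
    rw [le_div_iff₀ hsqrt, mul_comm]
  have hδ_pow : δ ^ (4 * r / (2 * r + 1)) =
      (n : ℝ) ^ (-(2 * r) / (2 * r + 1)) * log n ^ (4 * b * r / (2 * r + 1)) := by
    rw [div_rpow (by positivity) hsqrt.le, sqrt_eq_rpow, ← rpow_mul hlog.le, ← rpow_mul hn0.le,
      div_eq_mul_inv, ← rpow_neg hn0.le]
    ring_nf
  simp_rw [hcond, mul_assoc C, ← hδ_pow]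
  exact hbound δ (by positivity)

/-- Lemma 7, first assertion: under the Besov-type bound with `1 ≤ p < 2`,
`Σ_j Σ_k θ_{jk}² 1{√n |θ_{jk}| ≤ (ln n)^b} ≤ C n^{-2r/(2r+1)} (ln n)^{4br/(2r+1)}`. -/
theorem stmt_17 (p r A b : ℝ) (hp1 : 1 ≤ p) (hp2 : p < 2) (hr : 1 / p < r)
    (hA : 0 < A) (hb : 0 < b)
    (θ : ℕ → ℕ → ℝ)
    (hθ : ∀ j : ℕ, ∑ k ∈ Finset.range (2 ^ j), |θ j k| ^ p ≤
      A * (2 : ℝ) ^ (-(j : ℝ) * p * (r + 1 / 2 - 1 / p))) :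
    ∃ C : ℝ, 0 < C ∧ ∀ n : ℕ, 2 ≤ n →
      ∑' j : ℕ, ∑ k ∈ Finset.range (2 ^ j),
          (if Real.sqrt n * |θ j k| ≤ (Real.log n) ^ b then (θ j k) ^ 2 else 0)
        ≤ C * (n : ℝ) ^ (-(2 * r) / (2 * r + 1)) *
            (Real.log n) ^ (4 * b * r / (2 * r + 1)) :=
  stmt_17_general p r A b hp1 hp2 hr hA θ hθ
end
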